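/- Let Λ = ⟨x,y | x³ = y³ = (xy)⁴ = e⟩. The assignment a ↦ xy, b ↦ x defines a homomorphism ρ from G = ⟨a, b | a⁴b³ = e, aBab²ab² = e⟩ (with B = b⁻¹) to Λ, i.e., the images satisfy (xy)⁴x³ = e and (xy)x⁻¹(xy)x²(xy)x² = e in Λ. Moreover, ρ(aBAb) = [x,y] (with A = a⁻¹), and ρ((aBAb)²) = ρ(aBAbaBAb). -/
import Mathlib


namespace Stmt16

def a : FreeGroup (Fin 2) := FreeGroup.of 0
def b : FreeGroup (Fin 2) := FreeGroup.of 1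

/-- relators of π₁(m023(2,−1)) = ⟨a,b | a⁴b³, aBab²ab²⟩ -/
def m023Rels : Set (FreeGroup (Fin 2)) :=
  {a ^ 4 * b ^ 3, a * b⁻¹ * a * b ^ 2 * a * b ^ 2}

def xw : FreeGroup (Fin 2) := FreeGroup.of 0
def yw : FreeGroup (Fin 2) := FreeGroup.of 1

/-- relators of Λ₂(3,3,4) -/
def lambdaRels : Set (FreeGroup (Fin 2)) := {xw ^ 3, yw ^ 3, (xw * yw) ^ 4}

/-- x, y in Λ₂(3,3,4) -/
def x : PresentedGroup lambdaRels := PresentedGroup.of 0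
def y : PresentedGroup lambdaRels := PresentedGroup.of 1

/-- generators a, b of π₁(m023(2,−1)) -/
def A : PresentedGroup m023Rels := PresentedGroup.of 0
def B : PresentedGroup m023Rels := PresentedGroup.of 1

lemma rel_one (r : FreeGroup (Fin 2)) (hr : r ∈ lambdaRels) :
    PresentedGroup.mk lambdaRels r = 1 := by
  have : r ∈ Subgroup.normalClosure lambdaRels := Subgroup.subset_normalClosure hr
  exact (QuotientGroup.eq_one_iff r).mpr this

lemma hx3 : x ^ 3 = 1 := by
  have := rel_one (xw ^ 3) (Or.inl rfl)
  simpa [x, xw, PresentedGroup.of, map_pow] using this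

lemma hy3 : y ^ 3 = 1 := by
  have := rel_one (yw ^ 3) (Or.inr (Or.inl rfl))
  simpa [y, yw, PresentedGroup.of, map_pow] using this

lemma hxy4 : (x * y) ^ 4 = 1 := by
  have := rel_one ((xw * yw) ^ 4) (Or.inr (Or.inr rfl))
  simpa [x, y, xw, yw, PresentedGroup.of, map_pow, map_mul] using this

lemma second_rel : (x * y) * x⁻¹ * (x * y) * x ^ 2 * (x * y) * x ^ 2 = 1 := by
  calc (x * y) * x⁻¹ * (x * y) * x ^ 2 * (x * y) * x ^ 2
      = x * (y * (y * (x ^ 3 * (y * x ^ 2)))) := by simp [pow_succ, mul_assoc]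
    _ = x * (y ^ 3 * x ^ 2) := by rw [hx3, one_mul]; simp [pow_succ, mul_assoc]
    _ = x * x ^ 2 := by rw [hy3, one_mul]
    _ = 1 := by rw [← pow_succ']; exact hx3

/-- The assignment a ↦ xy, b ↦ x defines a homomorphism π₁(m023(2,−1)) → Λ₂(3,3,4):
the relators vanish in Λ₂(3,3,4), ρ(aBAb) = [x,y], and ρ((aBAb)²) = ρ(aBAbaBAb). -/
theorem m023_lagrangian :
    ((x * y) ^ 4 * x ^ 3 = 1) ∧
    ((x * y) * x⁻¹ * (x * y) * x ^ 2 * (x * y) * x ^ 2 = 1) ∧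
    ∃ ρ : PresentedGroup m023Rels →* PresentedGroup lambdaRels,
      ρ A = x * y ∧ ρ B = x ∧
      ρ (A * B⁻¹ * A⁻¹ * B) = x * y * x⁻¹ * y⁻¹ ∧
      ρ ((A * B⁻¹ * A⁻¹ * B) ^ 2) = ρ (A * B⁻¹ * A⁻¹ * B * A * B⁻¹ * A⁻¹ * B) := by
  refine ⟨by rw [hxy4, hx3, one_mul], second_rel, ?_⟩
  set f : Fin 2 → PresentedGroup lambdaRels := ![x * y, x] with hf
  have hrel : ∀ r ∈ m023Rels, FreeGroup.lift f r = 1 := by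
    rintro r (rfl | rfl)
    · simp only [a, b, map_mul, map_pow, FreeGroup.lift_apply_of, hf]
      show (x * y) ^ 4 * x ^ 3 = 1
      rw [hxy4, hx3, one_mul]
    · simp only [a, b, map_mul, map_pow, map_inv, FreeGroup.lift_apply_of, hf]
      show (x * y) * x⁻¹ * (x * y) * x ^ 2 * (x * y) * x ^ 2 = 1
      exact second_rel
  refine ⟨PresentedGroup.toGroup hrel, ?_, ?_, ?_, ?_⟩
  · show PresentedGroup.toGroup hrel (PresentedGroup.of 0) = x * y
    rw [PresentedGroup.toGroup.of]; rfl
  · show PresentedGroup.toGroup hrel (PresentedGroup.of 1) = x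
    rw [PresentedGroup.toGroup.of]; rfl
  · have hA : PresentedGroup.toGroup hrel A = x * y := by
      rw [A, PresentedGroup.toGroup.of]; rfl
    have hB : PresentedGroup.toGroup hrel B = x := by
      rw [B, PresentedGroup.toGroup.of]; rfl
    simp only [map_mul, map_inv, hA, hB]
    simp [mul_assoc]
  · exact congrArg _ (by simp [pow_succ, mul_assoc])

end Stmt16
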